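/- arXiv:2510.18765 — 2 statements merged into one kernel-verified Lean document; each statement's English description precedes it below -/
import Mathlib

section
/- The abstract group defined by the presentation ⟨a, b, c | a², b², c², (ba)², (cb)⁴, (ca)⁴⟩ is infinite. -/
/-- The relators of the Coxeter-type presentation
`⟨a, b, c | a², b², c², (ba)², (cb)⁴, (ca)⁴⟩` of `Aut(Λ²)`,
with `a, b, c` the generators `FreeGroup.of 0, FreeGroup.of 1, FreeGroup.of 2`. -/
def sqLatticeRels : Set (FreeGroup (Fin 3)) :=
  {(FreeGroup.of 0) ^ 2, (FreeGroup.of 1) ^ 2, (FreeGroup.of 2) ^ 2,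
   (FreeGroup.of 1 * FreeGroup.of 0) ^ 2,
   (FreeGroup.of 2 * FreeGroup.of 1) ^ 4,
   (FreeGroup.of 2 * FreeGroup.of 0) ^ 4}

/-- Reflection in x = 0. -/
def permA : Equiv.Perm (ℤ × ℤ) :=
  ⟨fun p => (-p.1, p.2), fun p => (-p.1, p.2), fun p => by simp, fun p => by simp⟩

/-- Reflection in y = 1/2. -/
def permB : Equiv.Perm (ℤ × ℤ) :=
  ⟨fun p => (p.1, 1 - p.2), fun p => (p.1, 1 - p.2), fun p => by simp, fun p => by simp⟩

/-- Reflection in y = x. -/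
def permC : Equiv.Perm (ℤ × ℤ) :=
  ⟨fun p => (p.2, p.1), fun p => (p.2, p.1), fun p => by simp, fun p => by simp⟩

def fGen : Fin 3 → Equiv.Perm (ℤ × ℤ) := ![permA, permB, permC]

lemma fGen_rels : ∀ r ∈ sqLatticeRels, FreeGroup.lift fGen r = 1 := by
  intro r hr
  rcases hr with h | h | h | h | h | h <;> subst h <;>
    simp only [map_pow, map_mul, FreeGroup.lift_apply_of, fGen] <;>
    ext p <;>
    simp [permA, permB, permC, pow_succ, Matrix.cons_val_zero, Matrix.cons_val_one,
      Equiv.Perm.mul_apply] <;> omega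

noncomputable def phi : PresentedGroup sqLatticeRels →* Equiv.Perm (ℤ × ℤ) :=
  PresentedGroup.toGroup fGen_rels

noncomputable def gElt : PresentedGroup sqLatticeRels :=
  PresentedGroup.of 2 * PresentedGroup.of 1 * PresentedGroup.of 2 * PresentedGroup.of 0

lemma phi_g : phi gElt = permC * permB * permC * permA := by
  simp [phi, gElt, map_mul, PresentedGroup.toGroup.of, fGen]

lemma trans_apply (n : ℕ) : ((permC * permB * permC * permA) ^ n) (0, 0) = ((n : ℤ), 0) := by
  induction n with
  | zero => simp
  | succ n ih =>
    rw [pow_succ', Equiv.Perm.mul_apply, ih]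
    simp only [permA, permB, permC, Equiv.Perm.mul_apply, Equiv.coe_fn_mk]
    push_cast
    ring_nf

/-- The group `⟨a, b, c | a², b², c², (ba)², (cb)⁴, (ca)⁴⟩` is infinite. -/
theorem stmt8 : Infinite (PresentedGroup sqLatticeRels) := by
  apply Infinite.of_injective (fun n : ℕ => gElt ^ n)
  intro m n h
  simp only at h
  have h2 : ((phi gElt) ^ m) (0, 0) = ((phi gElt) ^ n) (0, 0) := by
    rw [← map_pow, ← map_pow, h]
  rw [phi_g, trans_apply, trans_apply] at h2
  exact_mod_cast (Prod.mk.injEq _ _ _ _).mp h2 |>.1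
end

section
/- The infinite dihedral group D_∞ = ⟨a, b⟩ acting on Z (a: n↦n+1, b: n↦−n) has exactly three subgroups (up to equality, i.e., exactly these three) that act transitively on Z and are of finite index: D_∞ itself, ⟨a⟩ ≅ Z, and ⟨a², ba⟩ (another infinite dihedral subgroup of index 2). -/
/-! Every element of D∞ is `n ↦ k + n` or `n ↦ k - n`, so the stabilizer of `0` is `{1, b}`.
If `H ≤ D∞` is transitive on ℤ then `D∞ = H · {1, b}`, hence `H` has index at most `2`; and a
transitive `K ≤ H` with `H ∩ {1, b} ⊆ K` is all of `H`. So `H` is pinned down by which of `a`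
and `b` it contains: if `a ∈ H` then `H = D∞` or `H = ⟨a⟩` according as `b ∈ H` or not; if
`a ∉ H` then transitivity puts `a²` and the reflection `ab : n ↦ 1 - n` in `H` but keeps `b`
out, so `H = ⟨a², ab⟩`. -/

/-- Translation `n ↦ n + 1` on `ℤ`, as a permutation. -/
def dihTrans : Equiv.Perm ℤ := Equiv.addLeft 1

/-- Negation `n ↦ -n` on `ℤ`, as a permutation. -/
def dihNeg : Equiv.Perm ℤ := Equiv.neg ℤ

/-- The infinite dihedral group `D∞ = ⟨a, b⟩` acting on `ℤ`. -/
def dihGroup : Subgroup (Equiv.Perm ℤ) := Subgroup.closure {dihTrans, dihNeg}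

open MulAction

section Stabilizer

variable {G α : Type*} [Group G] [MulAction G α] {H K : Subgroup G} {x : α}

lemma Subgroup.exists_inv_mul_mem_stabilizer (hHK : H ≤ K)
    (htrans : ∀ g ∈ K, g • x ∈ orbit H x) {g : G} (hg : g ∈ K) :
    ∃ h ∈ H, h⁻¹ * g ∈ K ∧ h⁻¹ * g ∈ stabilizer G x := by
  obtain ⟨⟨h, hh⟩, hhx⟩ := mem_orbit_iff.mp (htrans g hg)
  refine ⟨h, hh, mul_mem (inv_mem (hHK hh)) hg, ?_⟩
  rw [mem_stabilizer_iff, mul_smul, ← hhx, Subgroup.mk_smul, inv_smul_smul]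

/-- Frattini's argument: `H = K · (H ∩ Stab x)`. -/
lemma Subgroup.le_of_stabilizer_le (hKH : K ≤ H) (htrans : ∀ g ∈ H, g • x ∈ orbit K x)
    (hstab : ∀ g ∈ H, g • x = x → g ∈ K) : H ≤ K := by
  intro g hg
  obtain ⟨k, hk, hkgH, hkgx⟩ := Subgroup.exists_inv_mul_mem_stabilizer hKH htrans hg
  simpa using mul_mem hk (hstab _ hkgH hkgx)

lemma Subgroup.relIndex_dvd_two_of_stabilizer {s : G} (hs : s ∈ K) (hHK : H ≤ K)
    (htrans : ∀ g ∈ K, g • x ∈ orbit H x) (hstab : ∀ g ∈ K, g • x = x → g = 1 ∨ g = s) :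
    H.relIndex K ∣ 2 := by
  refine Subgroup.relIndex_dvd_two_iff.mpr ⟨s⁻¹, inv_mem hs, fun g hg ↦ ?_⟩
  obtain ⟨h, hh, hhgK, hhgx⟩ := Subgroup.exists_inv_mul_mem_stabilizer hHK htrans hg
  rcases hstab _ hhgK hhgx with hhg | hhg
  · right; rwa [← inv_mul_eq_one.mp hhg]
  · left; rwa [← eq_mul_inv_of_mul_eq (inv_mul_eq_iff_eq_mul.mp hhg).symm]

end Stabilizer

lemma dihTrans_apply (n : ℤ) : dihTrans n = 1 + n := rfl

lemma dihNeg_apply (n : ℤ) : dihNeg n = -n := rfl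

lemma dihTrans_zpow_apply (k n : ℤ) : (dihTrans ^ k) n = k + n := by
  induction k using Int.induction_on generalizing n with
  | zero => simp
  | succ i ih => rw [zpow_add_one, Equiv.Perm.mul_apply, ih, dihTrans_apply]; ring
  | pred i ih =>
    have hinv : dihTrans⁻¹ n = -1 + n := by rw [Equiv.Perm.inv_eq_iff_eq, dihTrans_apply]; ring
    rw [zpow_sub_one, Equiv.Perm.mul_apply, ih, hinv]; ring

lemma dihTrans_mem_dihGroup : dihTrans ∈ dihGroup := Subgroup.subset_closure (by simp)

lemma dihNeg_mem_dihGroup : dihNeg ∈ dihGroup := Subgroup.subset_closure (by simp)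

lemma exists_apply_of_mem_dihGroup {g : Equiv.Perm ℤ} (hg : g ∈ dihGroup) :
    ∃ k : ℤ, (∀ n, g n = k + n) ∨ ∀ n, g n = k - n := by
  induction hg using Subgroup.closure_induction with
  | mem g hg =>
    rcases hg with rfl | rfl
    · exact ⟨1, Or.inl fun n ↦ rfl⟩
    · exact ⟨0, Or.inr fun n ↦ by simp [dihNeg_apply]⟩
  | one => exact ⟨0, Or.inl fun n ↦ by simp⟩
  | mul g h _ _ ihg ihh =>
    obtain ⟨j, hj | hj⟩ := ihg <;> obtain ⟨k, hk | hk⟩ := ihh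
    · exact ⟨j + k, Or.inl fun n ↦ by rw [Equiv.Perm.mul_apply, hj, hk]; ring⟩
    · exact ⟨j + k, Or.inr fun n ↦ by rw [Equiv.Perm.mul_apply, hj, hk]; ring⟩
    · exact ⟨j - k, Or.inr fun n ↦ by rw [Equiv.Perm.mul_apply, hj, hk]; ring⟩
    · exact ⟨j - k, Or.inl fun n ↦ by rw [Equiv.Perm.mul_apply, hj, hk]; ring⟩
  | inv g _ ihg =>
    obtain ⟨k, hk | hk⟩ := ihg
    · exact ⟨-k, Or.inl fun n ↦ by rw [Equiv.Perm.inv_eq_iff_eq, hk]; ring⟩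
    · exact ⟨k, Or.inr fun n ↦ by rw [Equiv.Perm.inv_eq_iff_eq, hk]; ring⟩

lemma eq_zpow_or_eq_zpow_mul_of_mem_dihGroup {g : Equiv.Perm ℤ} (hg : g ∈ dihGroup) :
    g = dihTrans ^ g 0 ∨ g = dihTrans ^ g 0 * dihNeg := by
  obtain ⟨k, hk | hk⟩ := exists_apply_of_mem_dihGroup hg
  · left; ext n; simp [hk, dihTrans_zpow_apply]
  · right; ext n; simp [hk, dihTrans_zpow_apply, dihNeg_apply, sub_eq_add_neg]

lemma eq_one_or_eq_dihNeg_of_mem_dihGroup {g : Equiv.Perm ℤ} (hg : g ∈ dihGroup)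
    (hg0 : g • (0 : ℤ) = 0) : g = 1 ∨ g = dihNeg := by
  rw [Equiv.Perm.smul_def] at hg0
  simpa [hg0] using eq_zpow_or_eq_zpow_mul_of_mem_dihGroup hg

lemma mem_orbit_zero_of_mem {H : Subgroup (Equiv.Perm ℤ)} {g : Equiv.Perm ℤ} (hg : g ∈ H) :
    g 0 ∈ orbit H (0 : ℤ) :=
  ⟨⟨g, hg⟩, rfl⟩

lemma relIndex_dihGroup_ne_zero {H : Subgroup (Equiv.Perm ℤ)} (hle : H ≤ dihGroup)
    (htrans : ∀ n : ℤ, n ∈ orbit H 0) : H.relIndex dihGroup ≠ 0 :=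
  ne_zero_of_dvd_ne_zero two_ne_zero <|
    Subgroup.relIndex_dvd_two_of_stabilizer dihNeg_mem_dihGroup hle (fun _ _ ↦ htrans _)
      fun _ hg ↦ eq_one_or_eq_dihNeg_of_mem_dihGroup hg

lemma closure_dihTrans_le_dihGroup : Subgroup.closure {dihTrans} ≤ dihGroup :=
  (Subgroup.closure_le _).mpr (by simpa using dihTrans_mem_dihGroup)

lemma mem_orbit_closure_dihTrans (n : ℤ) : n ∈ orbit (Subgroup.closure {dihTrans}) (0 : ℤ) := by
  simpa [dihTrans_zpow_apply] using
    mem_orbit_zero_of_mem (Subgroup.mem_closure_singleton.mpr ⟨n, rfl⟩ :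
      dihTrans ^ n ∈ Subgroup.closure {dihTrans})

/-- Its elements are the translations by even integers and the reflections `n ↦ m - n` with
`m` odd. -/
abbrev dihOddRefl : Subgroup (Equiv.Perm ℤ) := Subgroup.closure {dihTrans ^ 2, dihTrans * dihNeg}

lemma dihOddRefl_le_dihGroup : dihOddRefl ≤ dihGroup :=
  (Subgroup.closure_le _).mpr <| Set.insert_subset_iff.mpr
    ⟨pow_mem dihTrans_mem_dihGroup 2,
      Set.singleton_subset_iff.mpr (mul_mem dihTrans_mem_dihGroup dihNeg_mem_dihGroup)⟩

lemma mem_orbit_dihOddRefl (n : ℤ) : n ∈ orbit dihOddRefl (0 : ℤ) := by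
  have hsq : dihTrans ^ 2 ∈ dihOddRefl := Subgroup.subset_closure (by simp)
  have hrefl : dihTrans * dihNeg ∈ dihOddRefl := Subgroup.subset_closure (by simp)
  have hsq_zpow (k : ℤ) : (dihTrans ^ 2) ^ k = dihTrans ^ (2 * k) := by
    rw [← zpow_natCast, ← zpow_mul, Nat.cast_ofNat]
  obtain ⟨k, rfl | rfl⟩ := Int.even_or_odd' n
  · have := mem_orbit_zero_of_mem (zpow_mem hsq k)
    rwa [hsq_zpow, dihTrans_zpow_apply, add_zero] at this
  · have := mem_orbit_zero_of_mem (mul_mem (zpow_mem hsq k) hrefl)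
    rwa [hsq_zpow, Equiv.Perm.mul_apply, Equiv.Perm.mul_apply, dihNeg_apply, neg_zero,
      dihTrans_zpow_apply] at this

lemma mem_orbit_dihGroup (n : ℤ) : n ∈ orbit dihGroup (0 : ℤ) := by
  simpa [dihTrans_zpow_apply] using mem_orbit_zero_of_mem (zpow_mem dihTrans_mem_dihGroup n)

lemma dihNeg_mul_self : dihNeg * dihNeg = 1 := Equiv.ext neg_neg

lemma zpow_mem_or_zpow_mul_mem_of_mem_orbit {H : Subgroup (Equiv.Perm ℤ)} (hle : H ≤ dihGroup)
    {n : ℤ} (hn : n ∈ orbit H 0) : dihTrans ^ n ∈ H ∨ dihTrans ^ n * dihNeg ∈ H := by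
  obtain ⟨⟨g, hg⟩, rfl⟩ := hn
  change dihTrans ^ g 0 ∈ H ∨ dihTrans ^ g 0 * dihNeg ∈ H
  rcases eq_zpow_or_eq_zpow_mul_of_mem_dihGroup (hle hg) with hgt | hgt <;>
    [left; right] <;> rwa [← hgt]

lemma eq_dihGroup_of_mem {H : Subgroup (Equiv.Perm ℤ)} (hle : H ≤ dihGroup)
    (ht : dihTrans ∈ H) (hb : dihNeg ∈ H) : H = dihGroup :=
  le_antisymm hle <| (Subgroup.closure_le _).mpr <|
    Set.insert_subset_iff.mpr ⟨ht, Set.singleton_subset_iff.mpr hb⟩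

lemma eq_closure_dihTrans_of_dihNeg_notMem {H : Subgroup (Equiv.Perm ℤ)} (hle : H ≤ dihGroup)
    (ht : dihTrans ∈ H) (hb : dihNeg ∉ H) : H = Subgroup.closure {dihTrans} := by
  have hcl : Subgroup.closure {dihTrans} ≤ H := (Subgroup.closure_le _).mpr (by simpa)
  refine le_antisymm (Subgroup.le_of_stabilizer_le hcl
    (fun _ _ ↦ mem_orbit_closure_dihTrans _) fun g hg hg0 ↦ ?_) hcl
  rcases eq_one_or_eq_dihNeg_of_mem_dihGroup (hle hg) hg0 with rfl | rfl
  · exact one_mem _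
  · exact absurd hg hb

lemma eq_dihOddRefl_of_dihTrans_notMem {H : Subgroup (Equiv.Perm ℤ)} (hle : H ≤ dihGroup)
    (htrans : ∀ n : ℤ, n ∈ orbit H 0) (ht : dihTrans ∉ H) : H = dihOddRefl := by
  have hrefl : dihTrans * dihNeg ∈ H := by
    simpa [ht] using zpow_mem_or_zpow_mul_mem_of_mem_orbit hle (htrans 1)
  have hb : dihNeg ∉ H := fun hb ↦ ht <| by
    simpa [mul_assoc, dihNeg_mul_self] using mul_mem hrefl hb
  have hsq : dihTrans ^ 2 ∈ H := by
    refine (zpow_mem_or_zpow_mul_mem_of_mem_orbit hle (htrans 2)).resolve_right fun h ↦ ht ?_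
    have hprod : dihTrans ^ (2 : ℤ) * dihNeg * (dihTrans * dihNeg) = dihTrans := by
      ext n
      simp only [Equiv.Perm.mul_apply, dihTrans_zpow_apply, dihNeg_apply, dihTrans_apply]
      ring
    rw [← hprod]
    exact mul_mem h hrefl
  have hle' : dihOddRefl ≤ H := (Subgroup.closure_le _).mpr <|
    Set.insert_subset_iff.mpr ⟨hsq, Set.singleton_subset_iff.mpr hrefl⟩
  refine le_antisymm (Subgroup.le_of_stabilizer_le hle'
    (fun _ _ ↦ mem_orbit_dihOddRefl _) fun g hg hg0 ↦ ?_) hle'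
  rcases eq_one_or_eq_dihNeg_of_mem_dihGroup (hle hg) hg0 with rfl | rfl
  · exact one_mem _
  · exact absurd hg hb

/-- The infinite dihedral group `D∞ = ⟨a, b⟩` acting on `ℤ` has
exactly three finite-index subgroups acting transitively on `ℤ`:
`D∞` itself, `⟨a⟩ ≅ ℤ`, and `⟨a², ba⟩` (translation by 2 and reflection `n ↦ 1 - n`). -/
theorem stmt15 :
    {H : Subgroup (Equiv.Perm ℤ) |
        H ≤ dihGroup ∧ H.relIndex dihGroup ≠ 0 ∧
        ∀ n : ℤ, n ∈ MulAction.orbit H (0 : ℤ)} =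
      {dihGroup, Subgroup.closure {dihTrans},
        Subgroup.closure {dihTrans ^ 2, dihTrans * dihNeg}} := by
  ext H
  simp only [Set.mem_ofPred_eq, Set.mem_insert_iff, Set.mem_singleton_iff]
  constructor
  · rintro ⟨hle, -, htrans⟩
    by_cases ht : dihTrans ∈ H
    · by_cases hb : dihNeg ∈ H
      · exact Or.inl (eq_dihGroup_of_mem hle ht hb)
      · exact Or.inr (Or.inl (eq_closure_dihTrans_of_dihNeg_notMem hle ht hb))
    · exact Or.inr (Or.inr (eq_dihOddRefl_of_dihTrans_notMem hle htrans ht))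
  · rintro (rfl | rfl | rfl)
    · exact ⟨le_rfl, relIndex_dihGroup_ne_zero le_rfl mem_orbit_dihGroup, mem_orbit_dihGroup⟩
    · exact ⟨closure_dihTrans_le_dihGroup, relIndex_dihGroup_ne_zero
        closure_dihTrans_le_dihGroup mem_orbit_closure_dihTrans, mem_orbit_closure_dihTrans⟩
    · exact ⟨dihOddRefl_le_dihGroup, relIndex_dihGroup_ne_zero
        dihOddRefl_le_dihGroup mem_orbit_dihOddRefl, mem_orbit_dihOddRefl⟩
end
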